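/- arXiv:2604.27258 — 8 statements merged into one kernel-verified Lean document; each statement's English description precedes it below -/
import Mathlib

section
/- Let m_1, …, m_n be integers with each m_i ≥ 1, satisfying the polygon inequality m_i − 1 ≤ ∑_{j ≠ i} (m_j − 1) for all i. Let k = |{i : m_i ≥ 2}| and suppose k = 3. Then ∏_{i=1}^n m_i − (1 + ∑_{i=1}^n m_i(m_i − 1)) ≥ 2^3 − 2·3 − 1 = 1. -/
/-- The `k = 3` case of the key combinatorial inequality (Proposition A.3). -/
theorem stmt_1 (n : ℕ) (m : Fin n → ℤ) (hm : ∀ i, 1 ≤ m i)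
    (hpoly : ∀ i, m i - 1 ≤ ∑ j ∈ Finset.univ.erase i, (m j - 1))
    (hk : (Finset.univ.filter (fun i => 2 ≤ m i)).card = 3) :
    1 ≤ ∏ i, m i - (1 + ∑ i, m i * (m i - 1)) := by
  set S := Finset.univ.filter (fun i => 2 ≤ m i) with hSdef
  have hone : ∀ i, i ∉ S → m i = 1 := by
    intro i hi
    have h2 : ¬ 2 ≤ m i := by
      intro h; exact hi (by simp [hSdef, h])
    have := hm i
    omega
  obtain ⟨a, b, c, hab, hac, hbc, hS⟩ := Finset.card_eq_three.mp hk
  have haS : a ∈ S := by rw [hS]; simp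
  have hbS : b ∈ S := by rw [hS]; simp
  have hcS : c ∈ S := by rw [hS]; simp
  have ha2 : 2 ≤ m a := (Finset.mem_filter.mp haS).2
  have hb2 : 2 ≤ m b := (Finset.mem_filter.mp hbS).2
  have hc2 : 2 ≤ m c := (Finset.mem_filter.mp hcS).2
  -- product
  have hprod : ∏ i, m i = m a * m b * m c := by
    rw [← Finset.prod_subset (Finset.subset_univ S)
      (fun x _ hx => hone x hx)]
    rw [hS, Finset.prod_insert (by simp [hab, hac]),
      Finset.prod_insert (by simp [hbc]), Finset.prod_singleton, mul_assoc]
  -- sum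
  have hsum : ∑ i, m i * (m i - 1)
      = m a * (m a - 1) + m b * (m b - 1) + m c * (m c - 1) := by
    rw [← Finset.sum_subset (Finset.subset_univ S)
      (fun x _ hx => by rw [hone x hx]; ring)]
    rw [hS, Finset.sum_insert (by simp [hab, hac]),
      Finset.sum_insert (by simp [hbc]), Finset.sum_singleton, add_assoc]
  -- polygon inequalities reduced to the three indices
  have hkey : ∀ i j k : Fin n, i ∈ S → j ≠ i → k ≠ i → j ≠ k →
      S = {i, j, k} → m i - 1 ≤ (m j - 1) + (m k - 1) := by
    intro i j k hiS hji hki hjk hSeq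
    have h := hpoly i
    have hsub : S.erase i ⊆ Finset.univ.erase i := by
      intro x hx
      simp [Finset.mem_erase.mp hx |>.1]
    have hred : ∑ x ∈ Finset.univ.erase i, (m x - 1) = ∑ x ∈ S.erase i, (m x - 1) := by
      rw [← Finset.sum_subset hsub]
      intro x hx hxn
      have hxi : x ≠ i := (Finset.mem_erase.mp hx).1
      have : x ∉ S := fun hxS => hxn (Finset.mem_erase.mpr ⟨hxi, hxS⟩)
      rw [hone x this]; ring
    have herase : S.erase i = {j, k} := by
      rw [hSeq]
      ext x
      simp only [Finset.mem_erase, Finset.mem_insert, Finset.mem_singleton]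
      constructor
      · rintro ⟨hx, h | h | h⟩
        · exact absurd h hx
        · exact Or.inl h
        · exact Or.inr h
      · rintro (h | h)
        · exact ⟨h ▸ hji, Or.inr (Or.inl h)⟩
        · exact ⟨h ▸ hki, Or.inr (Or.inr h)⟩
    rw [hred, herase, Finset.sum_insert (by simp [hjk]), Finset.sum_singleton] at h
    exact h
  have hpa : m a - 1 ≤ (m b - 1) + (m c - 1) :=
    hkey a b c haS hab.symm hac.symm hbc hS
  have hpb : m b - 1 ≤ (m a - 1) + (m c - 1) := by
    have : S = {b, a, c} := by rw [hS]; ext x; simp; tauto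
    exact hkey b a c hbS hab hbc.symm hac this
  have hpc : m c - 1 ≤ (m a - 1) + (m b - 1) := by
    have : S = {c, a, b} := by rw [hS]; ext x; simp; tauto
    exact hkey c a b hcS hac hbc hab this
  rw [hprod, hsum]
  nlinarith [mul_nonneg (mul_nonneg (sub_nonneg.mpr ha2) (sub_nonneg.mpr hb2)) (sub_nonneg.mpr hc2),
    mul_nonneg (sub_nonneg.mpr ha2) (sub_nonneg.mpr hb2),
    mul_nonneg (sub_nonneg.mpr hb2) (sub_nonneg.mpr hc2),
    mul_nonneg (sub_nonneg.mpr ha2) (sub_nonneg.mpr hc2),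
    mul_nonneg (sub_nonneg (a := (m b - 1) + (m c - 1)) (b := m a - 1) |>.mpr hpa) (sub_nonneg.mpr ha2),
    mul_nonneg (sub_nonneg (a := (m a - 1) + (m c - 1)) (b := m b - 1) |>.mpr hpb) (sub_nonneg.mpr hb2),
    mul_nonneg (sub_nonneg (a := (m a - 1) + (m b - 1)) (b := m c - 1) |>.mpr hpc) (sub_nonneg.mpr hc2)]
end

section
/- Let m_1, …, m_n be integers with each m_i ≥ 1 satisfying m_i − 1 ≤ ∑_{j ≠ i}(m_j − 1) for all i, and let k = |{i : m_i ≥ 2}|. If k ≥ 4, then ∏_{i=1}^n m_i − (1 + ∑_{i=1}^n m_i(m_i − 1)) ≥ 2^k − 2k − 1 + (∏_{i : m_i ≥ 2}(m_i − 1)) − 1. -/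
/-!
Put `a i = m i - 1` on the set `S` of the `k` indices with `m i ≥ 2`; the other indices contribute
nothing. Expanding `∏ (a i + 1) = ∑_c e_c(a)` and using `e_c(a) ≥ C(k, c)` (as `a ≥ 1`), the
excess of `∏ m i` over `2 ^ k` dominates the excesses of `e_1, e_2, e_3, e_k`. Summing
`(a i - 1) (∑ a - 2 a i) ≥ 0`, which is where the polygon inequality enters, bounds `∑ a i ^ 2 - k`
by twice the excess of `e_2`, and for `k ≥ 4` the excess of `e_3` is at least that of `e_2`:
this comes from `(k - 2) (e_2 - C(k, 2)) ≤ 2 (e_3 - C(k, 3))`, proved by induction on `S`.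
-/

open Finset

section ESymm

variable {ι R : Type*} [CommRing R]

def esymm (S : Finset ι) (a : ι → R) (c : ℕ) : R :=
  ∑ t ∈ S.powersetCard c, ∏ i ∈ t, a i

variable (S : Finset ι) (a : ι → R)

theorem esymm_zero : esymm S a 0 = 1 := by
  simp [esymm]

theorem esymm_one : esymm S a 1 = ∑ i ∈ S, a i := by
  simp [esymm, powersetCard_one]

theorem esymm_card : esymm S a #S = ∏ i ∈ S, a i := by
  rw [esymm, powersetCard_self, sum_singleton]

theorem esymm_empty_succ (c : ℕ) : esymm (∅ : Finset ι) a (c + 1) = 0 := by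
  rw [esymm, powersetCard_eq_empty.2 (by simp), sum_empty]

theorem esymm_insert [DecidableEq ι] {x : ι} {S : Finset ι} (hx : x ∉ S) (c : ℕ) :
    esymm (insert x S) a (c + 1) = esymm S a (c + 1) + a x * esymm S a c := by
  have hxt : ∀ t ∈ S.powersetCard c, x ∉ t := fun t ht hxt =>
    hx ((mem_powersetCard.1 ht).1 hxt)
  rw [esymm, powersetCard_succ_insert hx, sum_union, sum_image, esymm, esymm, mul_sum]
  · exact congrArg _ (sum_congr rfl fun t ht => prod_insert (hxt t ht))
  · exact fun t ht t' ht' h => by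
      simpa [erase_insert (hxt t ht), erase_insert (hxt t' ht')] using congrArg (erase · x) h
  · refine disjoint_left.2 fun u hu hu' => ?_
    obtain ⟨t, -, rfl⟩ := mem_image.1 hu'
    exact hx ((mem_powersetCard.1 hu).1 (mem_insert_self x t))

theorem prod_add_one_eq_sum_esymm :
    ∏ i ∈ S, (a i + 1) = ∑ c ∈ range (#S + 1), esymm S a c := by
  rw [prod_add_one, sum_powerset]
  rfl

theorem sq_sum_eq_sum_sq_add_two_mul_esymm_two [DecidableEq ι] :
    (∑ i ∈ S, a i) ^ 2 = ∑ i ∈ S, a i ^ 2 + 2 * esymm S a 2 := by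
  induction S using Finset.induction_on with
  | empty => simp [esymm_empty_succ]
  | insert x S hx ih =>
    rw [sum_insert hx, sum_insert hx, esymm_insert a hx, esymm_one]
    linear_combination ih

theorem two_mul_choose_two (k : ℕ) : 2 * (k.choose 2 : R) = k * (k - 1) := by
  induction k with
  | zero => simp
  | succ k ih =>
    rw [Nat.choose_succ_succ, Nat.choose_one_right]
    push_cast
    linear_combination ih

theorem prod_add_one_sub_two_pow :
    ∏ i ∈ S, (a i + 1) - 2 ^ #S = ∑ c ∈ range (#S + 1), (esymm S a c - (#S).choose c) := by
  rw [sum_sub_distrib, prod_add_one_eq_sum_esymm, ← Nat.cast_sum, Nat.sum_range_choose]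
  push_cast
  rfl

end ESymm

section Ordered

variable {ι R : Type*} [CommRing R] [LinearOrder R] [IsStrictOrderedRing R]
  (S : Finset ι) {a : ι → R}

theorem card_le_sum (ha : ∀ i ∈ S, 1 ≤ a i) : (#S : R) ≤ ∑ i ∈ S, a i := by
  simpa using sum_le_sum ha

theorem choose_le_esymm (ha : ∀ i ∈ S, 1 ≤ a i) (c : ℕ) :
    ((#S).choose c : R) ≤ esymm S a c := by
  rw [← card_powersetCard, esymm]
  simpa using sum_le_sum fun t ht =>
    one_le_prod fun i hi => ha i ((mem_powersetCard.1 ht).1 hi)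

theorem sum_esymm_sub_choose_le (ha : ∀ i ∈ S, 1 ≤ a i) (hS : 4 ≤ #S) :
    (∑ i ∈ S, a i - #S) + (esymm S a 2 - (#S).choose 2) + (esymm S a 3 - (#S).choose 3) +
      (∏ i ∈ S, a i - 1) ≤ ∏ i ∈ S, (a i + 1) - 2 ^ #S := by
  have hexcess : ∀ c ∈ range #S, 0 ≤ esymm S a c - (#S).choose c :=
    fun c _ => sub_nonneg.2 (choose_le_esymm S ha c)
  have hfirst := sum_le_sum_of_subset_of_nonneg (range_subset_range.2 hS) fun c hc _ => hexcess c hc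
  simp only [sum_range_succ, range_zero, sum_empty, esymm_zero, esymm_one, Nat.choose_zero_right,
    Nat.choose_one_right] at hfirst
  rw [prod_add_one_sub_two_pow, sum_range_succ, esymm_card, Nat.choose_self]
  push_cast at hfirst ⊢
  linarith

variable [DecidableEq ι]

theorem card_sub_one_mul_sum_le_two_mul_esymm_two (ha : ∀ i ∈ S, 1 ≤ a i) :
    ((#S : R) - 1) * ∑ i ∈ S, a i ≤ 2 * esymm S a 2 := by
  induction S using Finset.induction_on with
  | empty => simp [esymm_empty_succ]
  | insert x S hx ih =>
    rw [forall_mem_insert] at ha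
    have hsum := card_le_sum S ha.2
    rw [sum_insert hx, esymm_insert a hx, esymm_one, card_insert_of_notMem hx]
    push_cast
    nlinarith [ih ha.2, mul_le_mul_of_nonneg_left hsum (by linarith : (0 : R) ≤ a x)]

theorem card_sub_one_mul_sum_sub_card_le (ha : ∀ i ∈ S, 1 ≤ a i) :
    ((#S : R) - 1) * (∑ i ∈ S, a i - #S) ≤ esymm S a 2 - (#S).choose 2 := by
  induction S using Finset.induction_on with
  | empty => simp [esymm_empty_succ]
  | insert x S hx ih =>
    rw [forall_mem_insert] at ha
    have hsum := card_le_sum S ha.2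
    rw [sum_insert hx, esymm_insert a hx, esymm_one, card_insert_of_notMem hx,
      Nat.choose_succ_succ, Nat.choose_one_right]
    push_cast
    nlinarith [ih ha.2, mul_le_mul_of_nonneg_left hsum (by linarith : (0 : R) ≤ a x - 1)]

theorem card_sub_two_mul_esymm_two_sub_le (ha : ∀ i ∈ S, 1 ≤ a i) :
    ((#S : R) - 2) * (esymm S a 2 - (#S).choose 2) ≤ 2 * (esymm S a 3 - (#S).choose 3) := by
  induction S using Finset.induction_on with
  | empty => simp [esymm_empty_succ]
  | insert x S hx ih =>
    rw [forall_mem_insert] at ha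
    rw [esymm_insert a hx, esymm_insert a hx, esymm_one, card_insert_of_notMem hx,
      Nat.choose_succ_succ _ 2, Nat.choose_succ_succ _ 1, Nat.choose_one_right]
    push_cast
    nlinarith [ih ha.2, card_sub_one_mul_sum_sub_card_le S ha.2,
      mul_le_mul_of_nonneg_left (card_sub_one_mul_sum_le_two_mul_esymm_two S ha.2)
        (by linarith : (0 : R) ≤ a x - 1)]

theorem sum_sq_add_card_sub_two_mul_sum_le (ha : ∀ i ∈ S, 1 ≤ a i)
    (hpoly : ∀ i ∈ S, 2 * a i ≤ ∑ j ∈ S, a j) :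
    ∑ i ∈ S, a i ^ 2 + ((#S : R) - 2) * ∑ i ∈ S, a i ≤ 2 * esymm S a 2 := by
  set A := ∑ i ∈ S, a i
  have hnonneg : 0 ≤ ∑ i ∈ S, (a i - 1) * (A - 2 * a i) :=
    sum_nonneg fun i hi => mul_nonneg (sub_nonneg.2 (ha i hi)) (sub_nonneg.2 (hpoly i hi))
  have hexpand :
      ∑ i ∈ S, (a i - 1) * (A - 2 * a i) = A ^ 2 - 2 * ∑ i ∈ S, a i ^ 2 - (#S - 2) * A := by
    simp only [sub_one_mul, mul_sub, sum_sub_distrib, ← sum_mul, sum_const, nsmul_eq_mul]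
    simp only [← mul_sum, mul_left_comm _ (2 : R), ← sq]
    ring
  linarith [sq_sum_eq_sum_sq_add_two_mul_esymm_two S a]

theorem two_pow_add_prod_le_of_polygon (ha : ∀ i ∈ S, 1 ≤ a i)
    (hpoly : ∀ i ∈ S, 2 * a i ≤ ∑ j ∈ S, a j) (hS : 4 ≤ #S) :
    2 ^ #S - 2 * #S - 1 + ∏ i ∈ S, a i - 1 ≤
      ∏ i ∈ S, (a i + 1) - (1 + ∑ i ∈ S, (a i + 1) * a i) := by
  have hk : (4 : R) ≤ #S := by exact_mod_cast hS
  have hA := card_le_sum S ha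
  have hsq_le : ∑ i ∈ S, a i ^ 2 - #S ≤ 2 * (esymm S a 2 - (#S).choose 2) := by
    nlinarith [sum_sq_add_card_sub_two_mul_sum_le S ha hpoly, two_mul_choose_two (R := R) #S]
  have hexcess : esymm S a 2 - (#S).choose 2 ≤ esymm S a 3 - (#S).choose 3 := by
    nlinarith [card_sub_two_mul_esymm_two_sub_le S ha, choose_le_esymm S ha 2]
  have hexpand : ∑ i ∈ S, (a i + 1) * a i = ∑ i ∈ S, a i ^ 2 + ∑ i ∈ S, a i := by
    rw [← sum_add_distrib]
    exact sum_congr rfl fun i _ => by ring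
  rw [hexpand]
  linarith [sum_esymm_sub_choose_le S ha hS]

end Ordered

/-- The `k ≥ 4` case of the combinatorial inequality (Proposition A.3). -/
theorem stmt_2 (n : ℕ) (m : Fin n → ℤ) (hm : ∀ i, 1 ≤ m i)
    (hpoly : ∀ i, m i - 1 ≤ ∑ j ∈ Finset.univ.erase i, (m j - 1))
    (k : ℕ) (hk : k = (Finset.univ.filter (fun i => 2 ≤ m i)).card) (hk4 : 4 ≤ k) :
    (2 : ℤ) ^ k - 2 * k - 1 +
        (∏ i ∈ Finset.univ.filter (fun i => 2 ≤ m i), (m i - 1)) - 1 ≤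
      ∏ i, m i - (1 + ∑ i, m i * (m i - 1)) := by
  subst hk
  set S := univ.filter (fun i => 2 ≤ m i)
  have hge_two : ∀ i, m i ≠ 1 → 2 ≤ m i := fun i h => by have := hm i; omega
  have hprod : ∏ i ∈ S, m i = ∏ i, m i := prod_filter_of_ne fun i _ h => hge_two i h
  have hsum : ∑ i ∈ S, m i * (m i - 1) = ∑ i, m i * (m i - 1) :=
    sum_filter_of_ne fun i _ h => hge_two i fun h1 => h (by simp [h1])
  have hsumA : ∑ i ∈ S, (m i - 1) = ∑ i, (m i - 1) :=
    sum_filter_of_ne fun i _ h => hge_two i fun h1 => h (by simp [h1])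
  have hpolyS : ∀ i ∈ S, 2 * (m i - 1) ≤ ∑ j ∈ S, (m j - 1) := fun i _ => by
    rw [hsumA, ← add_sum_erase _ _ (mem_univ i)]
    linarith [hpoly i]
  have hbound := two_pow_add_prod_le_of_polygon S (a := fun i => m i - 1)
    (fun i hi => by linarith [(mem_filter.1 hi).2]) hpolyS hk4
  simpa only [sub_add_cancel, hprod, hsum] using hbound
end

section
/- Define F(x) = ∏_{i=1}^k (1 + x_i) − ∏_{i=1}^k x_i − ∑_{i=1}^k (x_i + 1)x_i − 2^k + 2k + 1 on the set P = {x ∈ [1,∞)^k : x_i ≤ ∑_{j≠i} x_j for all i}, where k ≥ 4. Then for every x ∈ P and every i, the partial derivative ∂F/∂x_i at x is nonnegative; specifically, ∂_i F(x) = ∏_{j≠i}(1+x_j) − ∏_{j≠i} x_j − (2x_i + 1) ≥ 2∑_{j≠i} x_j − 2x_i ≥ 0. -/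
lemma aux_prod_ineq {ι : Type*} [DecidableEq ι] (x : ι → ℝ) :
    ∀ n : ℕ, ∀ s : Finset ι, s.card = n + 3 → (∀ j ∈ s, 1 ≤ x j) →
    ∏ j ∈ s, x j + 2 * ∑ j ∈ s, x j + 1 ≤ ∏ j ∈ s, (1 + x j) := by
  intro n
  induction n with
  | zero =>
    intro s hs hx
    obtain ⟨a, b, c, hab, hac, hbc, rfl⟩ := Finset.card_eq_three.mp hs
    have ha := hx a (by simp)
    have hb := hx b (by simp)
    have hc := hx c (by simp)
    rw [Finset.prod_insert (by simp [hab, hac]), Finset.prod_insert (by simp [hbc]),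
      Finset.prod_singleton, Finset.prod_insert (by simp [hab, hac]),
      Finset.prod_insert (by simp [hbc]), Finset.prod_singleton,
      Finset.sum_insert (by simp [hab, hac]), Finset.sum_insert (by simp [hbc]),
      Finset.sum_singleton]
    nlinarith [mul_le_mul hb hc (by linarith) (by linarith),
      mul_le_mul ha hb (by linarith) (by linarith),
      mul_le_mul ha hc (by linarith) (by linarith)]
  | succ n ih =>
    intro s hs hx
    have hne : s.Nonempty := Finset.card_pos.mp (by omega)
    obtain ⟨a, ha⟩ := hne
    set t := s.erase a with ht
    have hta : a ∉ t := Finset.notMem_erase a s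
    have hts : t.card = n + 3 := by
      rw [ht, Finset.card_erase_of_mem ha]; omega
    have hxt : ∀ j ∈ t, 1 ≤ x j := fun j hj => hx j (Finset.mem_of_mem_erase hj)
    have IH := ih t hts hxt
    have hP : (1:ℝ) ≤ ∏ j ∈ t, x j := by
      calc (1:ℝ) = ∏ _j ∈ t, (1:ℝ) := by simp
        _ ≤ ∏ j ∈ t, x j :=
          Finset.prod_le_prod (fun j _ => zero_le_one) hxt
    have hS : (n + 3 : ℝ) ≤ ∑ j ∈ t, x j := by
      calc (n + 3 : ℝ) = ∑ _j ∈ t, (1:ℝ) := by simp [hts]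
        _ ≤ ∑ j ∈ t, x j := Finset.sum_le_sum hxt
    have hxa : 1 ≤ x a := hx a ha
    rw [← Finset.mul_prod_erase s x ha, ← Finset.mul_prod_erase s (fun j => 1 + x j) ha,
      ← Finset.add_sum_erase s x ha, ← ht]
    have key : (1 + x a) * (∏ j ∈ t, x j + 2 * ∑ j ∈ t, x j + 1) ≤
        (1 + x a) * ∏ j ∈ t, (1 + x j) :=
      mul_le_mul_of_nonneg_left IH (by linarith)
    nlinarith [mul_le_mul_of_nonneg_left hS (by linarith : (0:ℝ) ≤ x a)]

/-- Nonnegativity of the partial derivatives of `F` on the polytope `P`: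
`∂ᵢF(x) = ∏_{j≠i}(1+x_j) − ∏_{j≠i} x_j − (2x_i+1) ≥ 2∑_{j≠i} x_j − 2x_i ≥ 0`. -/
theorem stmt_3 (k : ℕ) (hk : 4 ≤ k) (x : Fin k → ℝ)
    (hx1 : ∀ i, 1 ≤ x i)
    (hpoly : ∀ i, x i ≤ ∑ j ∈ Finset.univ.erase i, x j)
    (i : Fin k) :
    (2 * ∑ j ∈ Finset.univ.erase i, x j - 2 * x i ≤
        ∏ j ∈ Finset.univ.erase i, (1 + x j) - ∏ j ∈ Finset.univ.erase i, x j -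
          (2 * x i + 1)) ∧
      0 ≤ 2 * ∑ j ∈ Finset.univ.erase i, x j - 2 * x i := by
  have hcard : (Finset.univ.erase i).card = (k - 4) + 3 := by
    rw [Finset.card_erase_of_mem (Finset.mem_univ i), Finset.card_univ, Fintype.card_fin]
    omega
  have h := aux_prod_ineq x (k - 4) (Finset.univ.erase i) hcard
    (fun j _ => hx1 j)
  constructor
  · linarith
  · linarith [hpoly i]
end

section
/- Let n ≥ 3 and let S_1, …, S_n be finite sets with |S_i| ≥ 2 for all i. Then there exist subsets B_{-i} ⊆ ∏_{j≠i} S_j for i = 1, …, n such that the cylinders C_i = S_i × B_{-i} (viewed as subsets of S = ∏_j S_j) are pairwise disjoint and each satisfies |C_i| ≥ (1/(2n)^{log₂ 3}) · ∏_{j=1}^n |S_j|. -/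
/-!
Split each `S_j` into two halves `B_j` and `S_j \ B_j`, both of size at least `|S_j| / 3`.
A sign pattern `u : Fin n → Option Bool` (`none`: coordinate `j` free, `some true` /
`some false`: restricted to `B_j` / its complement) describes a product set of size at least
`3⁻ᵏ ∏ |S_j|` when at most `k` coordinates are restricted, and two such sets are disjoint once
their patterns prescribe opposite signs at some coordinate.

With `2 ^ (k - 1) ≤ n < 2 ^ k` it remains to find `n` pairwise conflicting patterns, the `i`-th
one leaving `i` free and restricting at most `k` coordinates. Player `i < k` sets coordinate
`p < k`, `p ≠ i`, to `p < i` and coordinate `k` to the parity of `i`: two of them conflict at `k`,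
or, having equal parity, at `i + 1`. Every other player sets the coordinates `< k` to its own
word outside the `k + 1` words `1ᵐ0ᵏ⁻ᵐ`, which conflicts with the patterns above; `n < 2 ^ k`
leaves enough words. Finally `3 ^ k = (2 ^ k) ^ log₂ 3 ≤ (2n) ^ log₂ 3`.
-/

open Finset

namespace CylinderPacking

section Halves

variable {β : Type*} [Fintype β] [DecidableEq β]

def sideSet (s : Finset β) : Option Bool → Finset β
  | none => univ
  | some true => s
  | some false => sᶜ

lemma disjoint_sideSet (s : Finset β) (b : Bool) :
    Disjoint (sideSet s (some b)) (sideSet s (some !b)) := by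
  cases b
  · exact disjoint_compl_left
  · exact disjoint_compl_right

lemma card_le_three_mul_card_sideSet {s : Finset β}
    (hs : Fintype.card β ≤ 3 * #s ∧ Fintype.card β ≤ 3 * #sᶜ) (o : Option Bool) :
    Fintype.card β ≤ (if o = none then 1 else 3) * #(sideSet s o) := by
  rcases o with _ | _ | _ <;> simp [sideSet, hs.1, hs.2]

lemma exists_finset_card_le_three_mul (h : 2 ≤ Fintype.card β) :
    ∃ s : Finset β, Fintype.card β ≤ 3 * #s ∧ Fintype.card β ≤ 3 * #sᶜ := by
  obtain ⟨s, -, hs⟩ := exists_subset_card_eq (s := (univ : Finset β))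
    (n := Fintype.card β / 2) (by simp [Nat.div_le_self])
  refine ⟨s, ?_, ?_⟩
  · omega
  · rw [card_compl]
    omega

end Halves

variable {ι : Type*}

def Conflict (u v : ι → Option Bool) : Prop :=
  ∃ p b, u p = some b ∧ v p = some !b

lemma Conflict.symm {u v : ι → Option Bool} (h : Conflict u v) : Conflict v u := by
  obtain ⟨p, b, hu, hv⟩ := h
  exact ⟨p, !b, hv, by simpa using hu⟩

variable [Fintype ι] [DecidableEq ι] {α : ι → Type*} [∀ j, Fintype (α j)]
  [∀ j, DecidableEq (α j)]

def patternCylinder (B : ∀ j, Finset (α j)) (u : ι → Option Bool) : Finset (∀ j, α j) :=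
  Fintype.piFinset fun j => sideSet (B j) (u j)

lemma mem_patternCylinder_congr (B : ∀ j, Finset (α j)) {u : ι → Option Bool} {i : ι}
    (hu : u i = none) {x y : ∀ j, α j} (hxy : ∀ j, j ≠ i → x j = y j) :
    x ∈ patternCylinder B u ↔ y ∈ patternCylinder B u := by
  simp only [patternCylinder, Fintype.mem_piFinset]
  refine forall_congr' fun j => ?_
  by_cases hj : j = i
  · subst hj
    simp [hu, sideSet]
  · rw [hxy j hj]

lemma disjoint_patternCylinder (B : ∀ j, Finset (α j)) {u v : ι → Option Bool}
    (h : Conflict u v) : Disjoint (patternCylinder B u) (patternCylinder B v) := by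
  obtain ⟨p, b, hu, hv⟩ := h
  refine disjoint_left.2 fun x hxu hxv => ?_
  rw [patternCylinder, Fintype.mem_piFinset] at hxu hxv
  exact disjoint_left.1 (disjoint_sideSet (B p) b) (hu ▸ hxu p) (hv ▸ hxv p)

lemma prod_card_le_three_pow_mul_card_patternCylinder {B : ∀ j, Finset (α j)}
    (hB : ∀ j, Fintype.card (α j) ≤ 3 * #(B j) ∧ Fintype.card (α j) ≤ 3 * #(B j)ᶜ)
    {u : ι → Option Bool} {k : ℕ} (hu : #{j | u j ≠ none} ≤ k) :
    ∏ j, Fintype.card (α j) ≤ 3 ^ k * #(patternCylinder B u) := by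
  have hweights : ∏ j, (if u j = none then 1 else 3) ≤ 3 ^ k := by
    rw [prod_ite, prod_const_one, one_mul, prod_const]
    exact Nat.pow_le_pow_right (by norm_num) hu
  calc ∏ j, Fintype.card (α j)
      ≤ ∏ j, (if u j = none then 1 else 3) * #(sideSet (B j) (u j)) :=
        prod_le_prod' fun j _ => card_le_three_mul_card_sideSet (hB j) (u j)
    _ ≤ 3 ^ k * #(patternCylinder B u) := by
        rw [prod_mul_distrib, patternCylinder, Fintype.card_piFinset]
        exact Nat.mul_le_mul_right _ hweights

def chainWord (k m : ℕ) : Fin k → Bool := fun t => decide ((t : ℕ) < m)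

def chainWords (k : ℕ) : Finset (Fin k → Bool) := (range (k + 1)).image (chainWord k)

lemma card_chainWords_le (k : ℕ) : #(chainWords k) ≤ k + 1 :=
  card_image_le.trans (card_range _).le

variable {n : ℕ}

def packingPattern (K : Fin n) (w : Fin n → Fin K → Bool) (i p : Fin n) : Option Bool :=
  if i < K then
    if p < K then (if p = i then none else some (decide (p < i)))
    else if p = K then some (decide (Even (i : ℕ))) else none
  else if hp : p < K then some (w i ⟨p, hp⟩) else none

variable {K : Fin n} {w : Fin n → Fin K → Bool} {i j : Fin n}

lemma packingPattern_self : packingPattern K w i i = none := by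
  unfold packingPattern
  split_ifs <;> first | rfl | omega

lemma packingPattern_of_lt (hi : i < K) (hj : j < K) (hji : j ≠ i) :
    packingPattern K w i j = some (decide (j < i)) := by
  simp [packingPattern, hi, hj, hji]

lemma packingPattern_parity (hi : i < K) :
    packingPattern K w i K = some (decide (Even (i : ℕ))) := by
  simp [packingPattern, hi]

lemma packingPattern_word (hi : K ≤ i) (t : Fin K) :
    packingPattern K w i ⟨t, t.isLt.trans K.isLt⟩ = some (w i t) := by
  simp [packingPattern, hi.not_gt, Fin.lt_def]

lemma card_support_packingPattern_le : #{p | packingPattern K w i p ≠ none} ≤ K := by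
  by_cases hi : i < K
  · calc #{p | packingPattern K w i p ≠ none} ≤ #((Iic K).erase i) := by
          refine card_le_card fun p hp => ?_
          simp only [mem_filter, mem_univ, true_and, packingPattern, if_pos hi] at hp
          simp only [mem_erase, mem_Iic]
          split_ifs at hp <;> first | exact absurd rfl hp | omega
      _ = K := by rw [card_erase_of_mem (mem_Iic.2 hi.le), Fin.card_Iic]; rfl
  · calc #{p | packingPattern K w i p ≠ none} ≤ #(Iio K) := by
          refine card_le_card fun p hp => ?_
          simp only [mem_filter, mem_univ, true_and, packingPattern, if_neg hi] at hp
          simp only [mem_Iio]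
          split_ifs at hp with hp' <;> first | exact absurd rfl hp | exact hp'
      _ = K := Fin.card_Iio _

lemma conflict_packingPattern_of_lt_of_lt (hij : i < j) (hj : j < K) :
    Conflict (packingPattern K w i) (packingPattern K w j) := by
  by_cases hpar : Even (i : ℕ) ↔ Even (j : ℕ)
  · have hsucc : (i : ℕ) + 1 ≠ j := fun h => by
      rw [← h, Nat.even_add_one] at hpar
      tauto
    let p : Fin n := ⟨i + 1, by omega⟩
    have hip : i < p := Fin.lt_def.2 (Nat.lt_succ_self _)
    have hpj : p < j := Fin.lt_def.2 (show (i : ℕ) + 1 < j by have := Fin.lt_def.1 hij; omega)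
    refine ⟨p, false, ?_, ?_⟩
    · rw [packingPattern_of_lt (hij.trans hj) (hpj.trans hj) hip.ne', decide_eq_false hip.not_gt]
    · rw [packingPattern_of_lt hj (hpj.trans hj) hpj.ne, decide_eq_true hpj]
      rfl
  · refine ⟨K, _, packingPattern_parity (hij.trans hj), ?_⟩
    rw [packingPattern_parity hj, Bool.eq_not_iff.2 fun h => hpar (decide_eq_decide.1 h).symm]

lemma conflict_packingPattern_of_lt_of_le (hi : i < K) (hj : K ≤ j)
    (hw : w j ∉ chainWords K) : Conflict (packingPattern K w i) (packingPattern K w j) := by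
  obtain ⟨t, hti, ht⟩ : ∃ t : Fin K, (t : ℕ) ≠ i ∧ w j t ≠ decide ((t : ℕ) < i) := by
    by_contra! h
    -- otherwise `w j` is the chain word that `i` leaves open at coordinate `i`
    refine hw (mem_image.2 ⟨if w j ⟨i, hi⟩ then i + 1 else i, by simp; split_ifs <;> omega, ?_⟩)
    funext t
    by_cases hti : (t : ℕ) = i
    · obtain rfl : t = ⟨i, hi⟩ := Fin.ext hti
      cases w j ⟨i, hi⟩ <;> simp [chainWord]
    · rw [h t hti]
      split_ifs <;> simp [chainWord]; omega
  refine ⟨⟨t, t.isLt.trans K.isLt⟩, _,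
    packingPattern_of_lt hi t.isLt (by simp [Fin.ext_iff, hti]), ?_⟩
  rw [packingPattern_word hj, Bool.eq_not_iff.2 ht]
  rfl

lemma conflict_packingPattern_of_le_of_le (hi : K ≤ i) (hj : K ≤ j) (hw : w i ≠ w j) :
    Conflict (packingPattern K w i) (packingPattern K w j) := by
  obtain ⟨t, ht⟩ := Function.ne_iff.1 hw
  refine ⟨⟨t, t.isLt.trans K.isLt⟩, _, packingPattern_word hi t, ?_⟩
  rw [packingPattern_word hj, Bool.eq_not_iff.2 (Ne.symm ht)]

lemma pairwise_conflict_packingPattern (hinj : Set.InjOn w (Set.Ici K))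
    (hw : Set.MapsTo w (Set.Ici K) (chainWords K : Set (Fin K → Bool))ᶜ) :
    Pairwise fun i j => Conflict (packingPattern K w i) (packingPattern K w j) := by
  suffices h : ∀ i j, i < j → Conflict (packingPattern K w i) (packingPattern K w j) from
    fun i j hij => hij.lt_or_gt.elim (h i j) fun hji => (h j i hji).symm
  intro i j hij
  rcases lt_or_ge j K with hj | hj
  · exact conflict_packingPattern_of_lt_of_lt hij hj
  rcases lt_or_ge i K with hi | hi
  · exact conflict_packingPattern_of_lt_of_le hi hj (hw hj)
  · exact conflict_packingPattern_of_le_of_le hi hj fun h => hij.ne (hinj hi hj h)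

lemma exists_injOn_mapsTo_compl_chainWords (K : Fin n) (hn : n < 2 ^ (K : ℕ)) :
    ∃ w : Fin n → Fin K → Bool, Set.InjOn w (Set.Ici K) ∧
      Set.MapsTo w (Set.Ici K) (chainWords K : Set (Fin K → Bool))ᶜ := by
  have hcard : #(Ici K) ≤ #(chainWords K)ᶜ := by
    have := card_chainWords_le K
    rw [Fin.card_Ici, card_compl, Fintype.card_fun, Fintype.card_bool, Fintype.card_fin]
    omega
  obtain ⟨e⟩ := Function.Embedding.nonempty_of_card_le (α := Ici K)
    (β := ((chainWords K)ᶜ : Finset _)) (by rwa [Fintype.card_coe, Fintype.card_coe])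
  let w : Fin n → Fin K → Bool := fun i =>
    if h : i ∈ Ici K then e ⟨i, h⟩ else fun _ => false
  have hw : ∀ i (hi : K ≤ i), w i = e ⟨i, mem_Ici.2 hi⟩ := fun i hi => dif_pos _
  refine ⟨w, fun i hi j hj hij => ?_, fun i hi => ?_⟩
  · rw [hw i hi, hw j hj] at hij
    simpa using e.injective (Subtype.ext hij)
  · rw [hw i hi]
    exact mem_compl.1 (e ⟨i, mem_Ici.2 hi⟩).2

lemma exists_pairwise_conflict {k : ℕ} (hkn : k < n) (hn : n < 2 ^ k) :
    ∃ d : Fin n → Fin n → Option Bool, (∀ i, d i i = none) ∧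
      (∀ i, #{p | d i p ≠ none} ≤ k) ∧ Pairwise fun i j => Conflict (d i) (d j) := by
  obtain ⟨w, hinj, hw⟩ := exists_injOn_mapsTo_compl_chainWords ⟨k, hkn⟩ hn
  exact ⟨packingPattern ⟨k, hkn⟩ w, fun i => packingPattern_self,
    fun i => card_support_packingPattern_le, pairwise_conflict_packingPattern hinj hw⟩

lemma two_mul_lt_two_pow {n : ℕ} (hn : 3 ≤ n) : 2 * n < 2 ^ n := by
  induction n, hn using Nat.le_induction with
  | base => norm_num
  | succ m _ ih => rw [pow_succ]; omega

lemma exists_lt_two_pow_le_two_mul {n : ℕ} (hn : 3 ≤ n) :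
    ∃ k, k < n ∧ n < 2 ^ k ∧ 2 ^ k ≤ 2 * n := by
  have hle : 2 ^ (Nat.log 2 n + 1) ≤ 2 * n := by
    rw [pow_succ, mul_comm]
    exact Nat.mul_le_mul_left 2 (Nat.pow_log_le_self 2 (by omega))
  refine ⟨_, ?_, Nat.lt_pow_succ_log_self one_lt_two n, hle⟩
  by_contra! h
  exact (two_mul_lt_two_pow hn).not_ge ((Nat.pow_le_pow_right two_pos h).trans hle)

lemma three_pow_le_rpow_logb {k : ℕ} {x : ℝ} (h : 2 ^ k ≤ x) :
    (3 : ℝ) ^ k ≤ x ^ Real.logb 2 3 := by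
  calc (3 : ℝ) ^ k = ((2 : ℝ) ^ k) ^ Real.logb 2 3 := by
        rw [← Real.rpow_pow_comm zero_le_two, Real.rpow_logb two_pos (by norm_num) three_pos]
    _ ≤ x ^ Real.logb 2 3 := by
        gcongr
        exact Real.logb_nonneg one_lt_two (by norm_num)

end CylinderPacking

open CylinderPacking

/-- Cylinder-packing lemma: for `n ≥ 3` and finite sets `S_i` with `|S_i| ≥ 2`,
there are pairwise disjoint `i`-cylinders `C_i` (sets not depending on the `i`-th
coordinate) with `|C_i| ≥ (1/(2n)^{log₂ 3})·∏_j |S_j|`. -/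
theorem stmt_11 (n : ℕ) (hn : 3 ≤ n) (α : Fin n → Type)
    [∀ j, Fintype (α j)] [∀ j, DecidableEq (α j)]
    (hcard : ∀ j, 2 ≤ Fintype.card (α j)) :
    ∃ C : Fin n → Finset (∀ j, α j),
      (∀ i, ∀ x y : ∀ j, α j, (∀ j, j ≠ i → x j = y j) → (x ∈ C i ↔ y ∈ C i)) ∧
      (∀ i i', i ≠ i' → Disjoint (C i) (C i')) ∧
      (∀ i, (1 / ((2 * (n : ℝ)) ^ (Real.logb 2 3))) * ∏ j, (Fintype.card (α j) : ℝ)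
          ≤ ((C i).card : ℝ)) := by
  obtain ⟨k, hkn, hn2k, h2kn⟩ := exists_lt_two_pow_le_two_mul hn
  obtain ⟨d, hself, hsupport, hconflict⟩ := exists_pairwise_conflict hkn hn2k
  choose B hB using fun j => exists_finset_card_le_three_mul (hcard j)
  refine ⟨fun i => patternCylinder B (d i), fun i _ _ => mem_patternCylinder_congr B (hself i),
    fun i i' h => disjoint_patternCylinder B (hconflict h), fun i => ?_⟩
  have hprod := prod_card_le_three_pow_mul_card_patternCylinder hB (hsupport i)
  have hpow := three_pow_le_rpow_logb (x := 2 * (n : ℝ)) (by exact_mod_cast h2kn)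
  rw [one_div, inv_mul_le_iff₀ (by positivity)]
  calc ∏ j, (Fintype.card (α j) : ℝ)
      ≤ 3 ^ k * #(patternCylinder B (d i)) := by exact_mod_cast hprod
    _ ≤ (2 * n) ^ Real.logb 2 3 * #(patternCylinder B (d i)) := by gcongr
end

section
/- Fix k ≥ 3 and n ≥ k. Define f : {1,…,n} → {0,1}^k by f(i) = e_i + e_{(i mod k)+1} (indices mod k, with e_j the standard basis vectors interpreted in {0,1}^k) for i ≤ k, and assign to each i > k a distinct codeword from {0,1}^k \ ({e_j : j ∈ [k]} ∪ {f(j) : j ∈ [k]}), which is possible provided 2^k ≥ 2n. Then f satisfies the separation property: for all i ≠ i′ there exists j ∈ [k] \ {i, i′} such that f_j(i) ≠ f_j(i′). -/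
private lemma mod_succ_cases (k a : ℕ) (hk : 1 ≤ k) (ha : a < k) :
    ((a+1) % k = a+1 ∧ a+1 < k) ∨ ((a+1) % k = 0 ∧ a+1 = k) := by
  rcases lt_or_eq_of_le (Nat.succ_le_of_lt ha) with h | h
  · exact Or.inl ⟨Nat.mod_eq_of_lt h, h⟩
  · exact Or.inr ⟨by rw [show a+1 = k from h, Nat.mod_self], h⟩

private lemma mod_succ2_cases (k a : ℕ) (hk : 3 ≤ k) (ha : a < k) :
    ((a+2) % k = a+2 ∧ a+2 < k) ∨ ((a+2) % k = a+2-k ∧ k ≤ a+2) := by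
  rcases lt_or_ge (a+2) k with h | h
  · exact Or.inl ⟨Nat.mod_eq_of_lt h, h⟩
  · refine Or.inr ⟨?_, h⟩
    rw [Nat.mod_eq_sub_mod h, Nat.mod_eq_of_lt (by omega)]

private lemma aux_mixed (k n : ℕ) (hk : 3 ≤ k) (f : Fin n → Fin k → Bool)
    (hfirst : ∀ (i : Fin n), (i : ℕ) < k → ∀ j : Fin k,
      (f i j = true ↔ ((j : ℕ) = (i : ℕ) ∨ (j : ℕ) = ((i : ℕ) + 1) % k)))
    (havoid_e : ∀ (i : Fin n), k ≤ (i : ℕ) → ∀ j : Fin k,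
      f i ≠ fun l => decide (l = j))
    (havoid_f : ∀ (i : Fin n), k ≤ (i : ℕ) → ∀ i' : Fin n, (i' : ℕ) < k → f i ≠ f i')
    (i i' : Fin n) (hi : (i:ℕ) < k) (hi' : k ≤ (i':ℕ)) :
    ∃ j : Fin k, (j:ℕ) ≠ (i:ℕ) ∧ (j:ℕ) ≠ (i':ℕ) ∧ f i j ≠ f i' j := by
  by_cases hdiff : ∃ j : Fin k, (j:ℕ) ≠ (i:ℕ) ∧ f i j ≠ f i' j
  · obtain ⟨j, hj1, hj2⟩ := hdiff
    exact ⟨j, hj1, by have := j.isLt; omega, hj2⟩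
  · exfalso
    push_neg at hdiff
    have h1 := mod_succ_cases k (i:ℕ) (by omega) hi
    have hlt1 : ((i:ℕ)+1) % k < k := by omega
    set ia : Fin k := ⟨(i:ℕ), hi⟩ with hia
    set j1 : Fin k := ⟨((i:ℕ)+1)%k, hlt1⟩ with hj1def
    have hia_val : f i ia = true := (hfirst i hi ia).mpr (Or.inl rfl)
    have hne' : f i' ≠ f i := havoid_f i' hi' i hi
    have hdia : f i' ia = false := by
      by_contra h
      rw [Bool.not_eq_false] at h
      refine hne' (funext fun l => ?_)
      by_cases hl : (l:ℕ) = (i:ℕ)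
      · have hl' : l = ia := Fin.ext hl
        rw [hl', h, hia_val]
      · exact (hdiff l hl).symm
    have hneval : (i:ℕ) ≠ ((i:ℕ)+1)%k := by omega
    have hne2 : ia ≠ j1 := fun h => hneval (congrArg Fin.val h)
    refine havoid_e i' hi' j1 (funext fun l => ?_)
    show f i' l = decide (l = j1)
    by_cases hl : (l:ℕ) = (i:ℕ)
    · have hl' : l = ia := Fin.ext hl
      rw [hl', hdia]
      simp [hne2]
    · rw [← hdiff l hl]
      by_cases hl2 : l = j1
      · have hv : f i j1 = true := (hfirst i hi j1).mpr (Or.inr rfl)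
        simp [hl2, hv]
      · have hft : f i l ≠ true := fun h => by
          rcases (hfirst i hi l).mp h with h' | h'
          · exact hl h'
          · exact hl2 (Fin.ext h')
        rw [Bool.eq_false_iff.mpr hft]
        simp [hl2]

/-- The binary-code construction in the cylinder-packing lemma satisfies the
separation property: for `i ≠ i′` there is `j ∈ [k] \ {i,i′}` with `f_j(i) ≠ f_j(i′)`. -/
theorem stmt_12 (k n : ℕ) (hk : 3 ≤ k) (hn : k ≤ n) (hcap : 2 * n ≤ 2 ^ k)
    (f : Fin n → Fin k → Bool)
    (hfirst : ∀ (i : Fin n), (i : ℕ) < k → ∀ j : Fin k,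
      (f i j = true ↔ ((j : ℕ) = (i : ℕ) ∨ (j : ℕ) = ((i : ℕ) + 1) % k)))
    (hinj : ∀ i i' : Fin n, k ≤ (i : ℕ) → k ≤ (i' : ℕ) → f i = f i' → i = i')
    (havoid_e : ∀ (i : Fin n), k ≤ (i : ℕ) → ∀ j : Fin k,
      f i ≠ fun l => decide (l = j))
    (havoid_f : ∀ (i : Fin n), k ≤ (i : ℕ) → ∀ i' : Fin n, (i' : ℕ) < k → f i ≠ f i') :
    ∀ i i' : Fin n, i ≠ i' →
      ∃ j : Fin k, (j : ℕ) ≠ (i : ℕ) ∧ (j : ℕ) ≠ (i' : ℕ) ∧ f i j ≠ f i' j := by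
  intro i i' hne
  have hval : (i:ℕ) ≠ (i':ℕ) := fun h => hne (Fin.ext h)
  rcases lt_or_ge (i:ℕ) k with hi | hi <;> rcases lt_or_ge (i':ℕ) k with hi' | hi'
  · -- both small
    have h1 := mod_succ_cases k (i:ℕ) (by omega) hi
    have h1' := mod_succ_cases k (i':ℕ) (by omega) hi'
    have h2 := mod_succ2_cases k (i:ℕ) hk hi
    by_cases hsucc : (i':ℕ) = ((i:ℕ)+1) % k
    · have hlt2 : ((i:ℕ)+2) % k < k := by omega
      refine ⟨⟨((i:ℕ)+2)%k, hlt2⟩, ?_, ?_, ?_⟩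
      · show ((i:ℕ)+2)%k ≠ (i:ℕ); omega
      · show ((i:ℕ)+2)%k ≠ (i':ℕ); omega
      · have hA' : ¬(((i:ℕ)+2)%k = (i:ℕ) ∨ ((i:ℕ)+2)%k = ((i:ℕ)+1)%k) := by
          push_neg; exact ⟨by omega, by omega⟩
        have hA : f i ⟨((i:ℕ)+2)%k, hlt2⟩ ≠ true :=
          fun h => hA' ((hfirst i hi ⟨((i:ℕ)+2)%k, hlt2⟩).mp h)
        have hB : f i' ⟨((i:ℕ)+2)%k, hlt2⟩ = true :=
          (hfirst i' hi' ⟨((i:ℕ)+2)%k, hlt2⟩).mpr (Or.inr (by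
            show ((i:ℕ)+2)%k = ((i':ℕ)+1)%k
            rw [hsucc, Nat.mod_add_mod]))
        exact fun h => hA (h.trans hB)
    · have hlt1 : ((i:ℕ)+1) % k < k := by omega
      refine ⟨⟨((i:ℕ)+1)%k, hlt1⟩, ?_, ?_, ?_⟩
      · show ((i:ℕ)+1)%k ≠ (i:ℕ); omega
      · show ((i:ℕ)+1)%k ≠ (i':ℕ); exact fun h => hsucc h.symm
      · have hA : f i ⟨((i:ℕ)+1)%k, hlt1⟩ = true :=
          (hfirst i hi ⟨((i:ℕ)+1)%k, hlt1⟩).mpr (Or.inr rfl)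
        have hB' : ¬(((i:ℕ)+1)%k = (i':ℕ) ∨ ((i:ℕ)+1)%k = ((i':ℕ)+1)%k) := by
          push_neg
          exact ⟨fun h => hsucc h.symm, by omega⟩
        exact fun h => hB' ((hfirst i' hi' ⟨((i:ℕ)+1)%k, hlt1⟩).mp (h.symm.trans hA))
  · -- i small, i' large
    exact aux_mixed k n hk f hfirst havoid_e havoid_f i i' hi hi'
  · -- i large, i' small
    obtain ⟨j, hj1, hj2, hj3⟩ := aux_mixed k n hk f hfirst havoid_e havoid_f i' i hi' hi
    exact ⟨j, hj2, hj1, fun h => hj3 h.symm⟩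
  · -- both large
    have hne2 : f i ≠ f i' := fun h => hne (hinj i i' hi hi' h)
    obtain ⟨j, hj⟩ := Function.ne_iff.mp hne2
    exact ⟨j, by have := j.isLt; omega, by have := j.isLt; omega, hj⟩
end

section
/- Let n ≥ 4 and suppose integers |S_1|, …, |S_n| ≥ 2 satisfy the polygon inequality |S_i| − 1 ≤ ∑_{j≠i}(|S_j| − 1). Then the quantity Q = ∏_i |S_i| − (1 + ∑_i |S_i|(|S_i| − 1)) exceeds ∏_i (|S_i| − 1) by at least 2^n − 2n − 2 ≥ 6. -/
/-!
Write `c i = |S_i| - 1 ≥ 1`. Lowering a largest `c i` by one keeps the polygon inequality (on the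
other side of it there is still a third coordinate `≥ 1`) and lowers the excess
`∏ (1 + c) - (1 + ∑ (1 + c) c) - ∏ c` by `∏_{j ≠ i} (1 + c j) - ∏_{j ≠ i} c j - 2 c i`. This is
positive: over `k ≥ 3` factors `∏ (1 + c) - ∏ c ≥ (k - 1) ∑ c + 1 > 2 ∑ c`, and `c i ≤ ∑_{j ≠ i} c j`.
The descent ends at `c ≡ 1`, where the excess is exactly `2^n - 2n - 2`.
-/

open Finset

theorem sub_one_mul_sum_add_one_le_prod_one_add_sub_prod {ι : Type*} {s : Finset ι} {c : ι → ℤ}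
    (hc : ∀ i ∈ s, 1 ≤ c i) (hs : 2 ≤ #s) :
    (#s - 1 : ℤ) * ∑ i ∈ s, c i + 1 ≤ ∏ i ∈ s, (1 + c i) - ∏ i ∈ s, c i := by
  induction s using Finset.cons_induction with
  | empty => simp at hs
  | cons a t hat ih =>
    have hca : 1 ≤ c a := hc a (mem_cons_self a t)
    have hct : ∀ i ∈ t, 1 ≤ c i := fun i hi => hc i (mem_cons_of_mem hi)
    have hprod : 1 ≤ ∏ i ∈ t, c i := one_le_prod hct
    rw [card_cons, prod_cons, sum_cons, prod_cons]
    push_cast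
    rcases (show #t = 1 ∨ 2 ≤ #t by rw [card_cons] at hs; omega) with ht | ht
    · obtain ⟨x, rfl⟩ := card_eq_one.mp ht
      simp only [card_singleton, sum_singleton, prod_singleton, Nat.cast_one]
      linarith
    · have hsum : (#t : ℤ) ≤ ∑ i ∈ t, c i := by
        simpa using card_nsmul_le_sum t c 1 hct
      have hk : (2 : ℤ) ≤ #t := by exact_mod_cast ht
      -- With `P, Q, T` the product of `1 + c`, product of `c`, sum of `c` over `t`:
      -- `(1 + c a) P - c a Q = (1 + c a) (P - Q) + Q`, and the slack over the bound from `ih` is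
      -- at least `(c a - 1) (T - 1) + c a (#t - 2) (T - 1)`.
      nlinarith [mul_le_mul_of_nonneg_left (ih hct ht) (by linarith : (0 : ℤ) ≤ 1 + c a),
        mul_nonneg (sub_nonneg.2 hca) (by linarith : (0 : ℤ) ≤ ∑ i ∈ t, c i - 1),
        mul_nonneg (mul_nonneg (by linarith : (0 : ℤ) ≤ c a) (sub_nonneg.2 hk))
          (by linarith : (0 : ℤ) ≤ ∑ i ∈ t, c i - 1)]

section

variable {ι : Type*} [Fintype ι] [DecidableEq ι]

@[to_additive]
theorem prod_comp_update {α M : Type*} [CommMonoid M] (g : α → M) (f : ι → α)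
    (i : ι) (v : α) : ∏ j, g (Function.update f i v j) = g v * ∏ j ∈ univ.erase i, g (f j) := by
  rw [prod_congr rfl fun j _ => Function.apply_update (fun _ => g) f i v j,
    prod_update_of_mem (mem_univ i), sdiff_singleton_eq_erase]

def PolygonInequality (c : ι → ℤ) : Prop :=
  ∀ i, c i ≤ ∑ j ∈ univ.erase i, c j

def excess (c : ι → ℤ) : ℤ :=
  ∏ i, (1 + c i) - (1 + ∑ i, (1 + c i) * c i) - ∏ i, c i

theorem excess_update_sub_one_lt {c : ι → ℤ} (hc : ∀ i, 1 ≤ c i) (hι : 4 ≤ Fintype.card ι)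
    (i : ι) (hpoly : c i ≤ ∑ j ∈ univ.erase i, c j) :
    excess (Function.update c i (c i - 1)) < excess c := by
  have hcard : #(univ.erase i) = Fintype.card ι - 1 := by
    rw [card_erase_of_mem (mem_univ i), card_univ]
  have key := sub_one_mul_sum_add_one_le_prod_one_add_sub_prod (fun j _ => hc j)
    (show 2 ≤ #(univ.erase i) by omega)
  have hS : 2 * ∑ j ∈ univ.erase i, c j ≤ (#(univ.erase i) - 1 : ℤ) * ∑ j ∈ univ.erase i, c j :=
    mul_le_mul_of_nonneg_right (by rw [hcard]; omega)
      (sum_nonneg fun j _ => by linarith [hc j])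
  unfold excess
  rw [prod_comp_update (1 + ·), sum_comp_update (fun x => (1 + x) * x),
    prod_update_of_mem (mem_univ i), sdiff_singleton_eq_erase,
    ← mul_prod_erase univ (1 + c ·) (mem_univ i),
    ← add_sum_erase univ (fun j => (1 + c j) * c j) (mem_univ i),
    ← mul_prod_erase univ c (mem_univ i)]
  linarith

theorem PolygonInequality.update_sub_one {c : ι → ℤ} (hpoly : PolygonInequality c)
    (hc : ∀ j, 1 ≤ c j) (hι : 3 ≤ Fintype.card ι) {i : ι} (hmax : ∀ j, c j ≤ c i) :
    PolygonInequality (Function.update c i (c i - 1)) := by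
  intro j
  rcases eq_or_ne j i with rfl | hji
  · rw [Function.update_self, sum_update_of_notMem (notMem_erase j univ)]
    linarith [hpoly j]
  · have hi : i ∈ univ.erase j := mem_erase.2 ⟨hji.symm, mem_univ i⟩
    obtain ⟨k, hk, hki⟩ : ∃ k ∈ univ.erase j, k ≠ i :=
      exists_mem_ne (by rw [card_erase_of_mem (mem_univ j), card_univ]; omega) i
    have hlt : c i < ∑ l ∈ univ.erase j, c l :=
      single_lt_sum hki hi hk (by linarith [hc k]) fun l _ _ => by linarith [hc l]
    rw [sum_eq_add_sum_sdiff_singleton_of_mem hi] at hlt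
    rw [Function.update_of_ne hji, sum_update_of_mem hi]
    linarith [hmax j]

theorem two_pow_card_sub_le_excess (hι : 4 ≤ Fintype.card ι) {c : ι → ℤ} (hc : ∀ i, 1 ≤ c i)
    (hpoly : PolygonInequality c) :
    2 ^ Fintype.card ι - 2 * Fintype.card ι - 2 ≤ excess c := by
  obtain ⟨N, hN⟩ : ∃ N : ℕ, ∑ i, (c i - 1) = N :=
    Int.eq_ofNat_of_zero_le (sum_nonneg fun i _ => sub_nonneg.2 (hc i))
  induction N generalizing c with
  | zero =>
    obtain rfl : c = fun _ => 1 := funext fun i => by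
      have := (sum_eq_zero_iff_of_nonneg fun j _ => sub_nonneg.2 (hc j)).1 hN i (mem_univ i)
      linarith
    simp [excess]
    linarith
  | succ N ih =>
    have : Nonempty ι := Fintype.card_pos_iff.1 (by omega)
    obtain ⟨i, hmax⟩ := Finite.exists_max c
    have hci : 2 ≤ c i := by
      by_contra! h
      have : ∑ j, (c j - 1) ≤ 0 := sum_nonpos fun j _ => by linarith [hmax j]
      omega
    have hc' : ∀ j, 1 ≤ Function.update c i (c i - 1) j := fun j => by
      rcases eq_or_ne j i with rfl | hji
      · rw [Function.update_self]; linarith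
      · rw [Function.update_of_ne hji]; exact hc j
    have hN' : ∑ j, (Function.update c i (c i - 1) j - 1) = N := by
      rw [← add_sum_erase univ _ (mem_univ i)] at hN
      rw [sum_comp_update (· - 1)]
      push_cast at hN
      linarith
    calc _ ≤ excess (Function.update c i (c i - 1)) :=
          ih hc' (hpoly.update_sub_one hc (by omega) hmax) hN'
      _ ≤ excess c := (excess_update_sub_one_lt hc hι i (hpoly i)).le

end

theorem six_le_two_pow_sub {n : ℕ} (hn : 4 ≤ n) : (6 : ℤ) ≤ 2 ^ n - 2 * n - 2 := by
  induction n, hn using Nat.le_induction with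
  | base => norm_num
  | succ k _ ih =>
    push_cast
    rw [pow_succ]
    linarith

/-- For `n ≥ 4` support sizes `≥ 2` satisfying the polygon inequality, the quantity
`Q = ∏|S_i| − (1 + ∑|S_i|(|S_i|−1))` exceeds `∏(|S_i|−1)` by at least `2^n − 2n − 2 ≥ 6`. -/
theorem stmt_14 (n : ℕ) (hn : 4 ≤ n) (m : Fin n → ℤ) (hm : ∀ i, 2 ≤ m i)
    (hpoly : ∀ i, m i - 1 ≤ ∑ j ∈ Finset.univ.erase i, (m j - 1)) :
    ((2 : ℤ) ^ n - 2 * n - 2 ≤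
        (∏ i, m i - (1 + ∑ i, m i * (m i - 1))) - ∏ i, (m i - 1)) ∧
      (6 : ℤ) ≤ (2 : ℤ) ^ n - 2 * n - 2 := by
  refine ⟨?_, six_le_two_pow_sub hn⟩
  have h := two_pow_card_sub_le_excess (c := fun i => m i - 1) (by simpa using hn)
    (fun i => by linarith [hm i]) hpoly
  simpa only [excess, Fintype.card_fin, add_sub_cancel] using h
end

section
/- Let f(θ) = 8θ(1−θ) − 1 on [0,1]. Consider the optimization: maximize p·θ·f(θ) over (θ, p) ∈ [0,1]² subject to (1−p)·f(0) + p·(1−θ)·f(θ) = 0. The optimal value is W* = √2 − 1, attained at θ* = 1 − √2/4 and p* = (4 + √2)/7. Moreover θ* > argmax_θ θ·f(θ) = (4 + √10)/12. -/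
/-- The payoff function `f(θ) = 8θ(1−θ) − 1` of the binary-action example. -/
noncomputable def fq (θ : ℝ) : ℝ := 8 * θ * (1 - θ) - 1

/-- The optimal correlated-equilibrium welfare for `f(θ) = 8θ(1−θ) − 1`:
maximizing `p·θ·f(θ)` subject to `(1−p)f(0) + p(1−θ)f(θ) = 0` over `[0,1]²` yields
`W* = √2 − 1` at `θ* = 1 − √2/4`, `p* = (4+√2)/7`, and `θ*` exceeds the first-best
`argmax θ·f(θ) = (4+√10)/12`. -/
theorem stmt_16 :
    IsGreatest
      {w : ℝ | ∃ θ p : ℝ, θ ∈ Set.Icc (0 : ℝ) 1 ∧ p ∈ Set.Icc (0 : ℝ) 1 ∧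
        (1 - p) * fq 0 + p * (1 - θ) * fq θ = 0 ∧ w = p * θ * fq θ}
      (Real.sqrt 2 - 1) ∧
    ((4 + Real.sqrt 2) / 7) * (1 - Real.sqrt 2 / 4) * fq (1 - Real.sqrt 2 / 4) =
      Real.sqrt 2 - 1 ∧
    (1 - (4 + Real.sqrt 2) / 7) * fq 0 +
        ((4 + Real.sqrt 2) / 7) * (1 - (1 - Real.sqrt 2 / 4)) * fq (1 - Real.sqrt 2 / 4)
      = 0 ∧
    (4 + Real.sqrt 10) / 12 < 1 - Real.sqrt 2 / 4 ∧
    (∀ θ ∈ Set.Icc (0 : ℝ) 1,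
      θ * fq θ ≤ ((4 + Real.sqrt 10) / 12) * fq ((4 + Real.sqrt 10) / 12)) := by
  have s := Real.sqrt 2
  have hs2 : Real.sqrt 2 ^ 2 = 2 := Real.sq_sqrt (by norm_num)
  have hs0 : (0:ℝ) ≤ Real.sqrt 2 := Real.sqrt_nonneg 2
  have hr2 : Real.sqrt 10 ^ 2 = 10 := Real.sq_sqrt (by norm_num)
  have hr0 : (0:ℝ) ≤ Real.sqrt 10 := Real.sqrt_nonneg 10
  have hs_lt : Real.sqrt 2 ≤ 3/2 := by nlinarith [sq_nonneg (Real.sqrt 2 - 3/2)]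
  have hs_ge : (1:ℝ) ≤ Real.sqrt 2 := by nlinarith [sq_nonneg (Real.sqrt 2 - 1)]
  have hval : ((4 + Real.sqrt 2) / 7) * (1 - Real.sqrt 2 / 4) * fq (1 - Real.sqrt 2 / 4) =
      Real.sqrt 2 - 1 := by
    simp only [fq]; nlinarith [hs2]
  have hcon : (1 - (4 + Real.sqrt 2) / 7) * fq 0 +
        ((4 + Real.sqrt 2) / 7) * (1 - (1 - Real.sqrt 2 / 4)) * fq (1 - Real.sqrt 2 / 4)
      = 0 := by
    simp only [fq]; nlinarith [hs2]
  refine ⟨⟨⟨1 - Real.sqrt 2 / 4, (4 + Real.sqrt 2) / 7, ?_, ?_, hcon, hval.symm⟩, ?_⟩,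
    hval, hcon, ?_, ?_⟩
  · constructor <;> nlinarith
  · constructor <;> nlinarith
  · rintro w ⟨θ, p, ⟨hθ0, hθ1⟩, ⟨hp0, hp1⟩, hc, rfl⟩
    simp only [fq] at hc ⊢
    have key : 0 ≤ p * θ * (Real.sqrt 2 * (2 * Real.sqrt 2 * (1 - θ) - 1) ^ 2) :=
      mul_nonneg (mul_nonneg hp0 hθ0)
        (mul_nonneg hs0 (sq_nonneg _))
    have hc' : p * θ * (1 + 8 * (1 - θ) ^ 2) = 1 := by linear_combination hc
    have hident : p * θ * (8 * θ * (1 - θ) - 1) =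
        (Real.sqrt 2 - 1) - p * θ * (Real.sqrt 2 * (2 * Real.sqrt 2 * (1 - θ) - 1) ^ 2) := by
      linear_combination (Real.sqrt 2 - 1) * hc' +
        (p * θ * (4 * Real.sqrt 2 * (1 - θ) ^ 2 - 4 * (1 - θ))) * hs2
    linarith [key, hident]
  · nlinarith [sq_nonneg (Real.sqrt 10 - 16/5), sq_nonneg (Real.sqrt 2 - 3/2)]
  · intro θ ⟨hθ0, hθ1⟩
    simp only [fq]
    have hr3 : (3:ℝ) ≤ Real.sqrt 10 := by nlinarith [sq_nonneg (Real.sqrt 10 - 3)]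
    have h1 : 0 ≤ θ - 1 + 2 * ((4 + Real.sqrt 10) / 12) := by nlinarith
    nlinarith [mul_nonneg (sq_nonneg (θ - (4 + Real.sqrt 10) / 12)) h1, hr2]
end

section
/- Let f : [0,1] → ℝ be Lipschitz with constant L, taking both positive and negative values with f(1) < 0. In the n-agent binary-action game where each agent's payoff is 0 for action 0 and f(fraction of agents playing 1) for action 1, every Nash equilibrium gives each agent an expected payoff between 0 and L/n. -/
/-- Expected payoff of agent `i` in the binary-action game when agents independently
play action `1` with probabilities `p j`: the payoff of action `0` is `0` and that of
action `1` is `f` of the realized fraction of agents playing `1`. -/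
noncomputable def expPay (n : ℕ) (f : ℝ → ℝ) (p : Fin n → ℝ) (i : Fin n) : ℝ :=
  ∑ a : Fin n → Bool,
    (∏ j, (if a j then p j else 1 - p j)) *
      (if a i then
        f (((Finset.univ.filter (fun j => a j = true)).card : ℝ) / (n : ℝ))
      else 0)

/-- scaling in own probability -/
lemma expPay_update_scale (n : ℕ) (f : ℝ → ℝ) (p : Fin n → ℝ) (i : Fin n) (q : ℝ) :
    expPay n f (Function.update p i q) i = q * expPay n f (Function.update p i 1) i := by
  unfold expPay
  rw [Finset.mul_sum]
  refine Finset.sum_congr rfl fun a _ => ?_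
  by_cases h : a i
  · have hprod : ∀ r : ℝ,
        (∏ j, (if a j then Function.update p i r j else 1 - Function.update p i r j))
          = r * ∏ j ∈ Finset.univ.erase i, (if a j then p j else 1 - p j) := by
      intro r
      rw [← Finset.mul_prod_erase _ _ (Finset.mem_univ i)]
      congr 1
      · simp [h]
      · refine Finset.prod_congr rfl fun j hj => ?_
        have hji : j ≠ i := Finset.ne_of_mem_erase hj
        simp [Function.update_of_ne hji]
    rw [hprod q, hprod 1]
    ring
  · simp [h]

/-- normalization -/
lemma sum_prod_weights (n : ℕ) (P : Fin n → ℝ) :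
    ∑ a : Fin n → Bool, ∏ j, (if a j then P j else 1 - P j) = 1 := by
  classical
  have h := Finset.prod_univ_sum (fun _ : Fin n => (Finset.univ : Finset Bool))
    (fun j b => if b then P j else 1 - P j)
  rw [Fintype.piFinset_univ] at h
  rw [← h]
  have : ∀ j : Fin n, (∑ b ∈ (Finset.univ : Finset Bool), (if b then P j else 1 - P j)) = 1 := by
    intro j; simp
  simp [this]

/-- pairing along coordinate k -/
lemma pair_sum (n : ℕ) (k : Fin n) (F : (Fin n → Bool) → ℝ) :
    ∑ a : Fin n → Bool, F a
      = ∑ a : Fin n → Bool, (if a k then F a + F (Function.update a k false) else 0) := by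
  classical
  rw [← Finset.sum_filter_add_sum_filter_not Finset.univ (fun a => a k = true) F]
  have h2 : ∑ a ∈ Finset.univ.filter (fun a : Fin n → Bool => ¬ a k = true), F a
      = ∑ a ∈ Finset.univ.filter (fun a : Fin n → Bool => a k = true),
          F (Function.update a k false) := by
    refine Finset.sum_nbij' (fun a => Function.update a k true) (fun a => Function.update a k false)
      ?_ ?_ ?_ ?_ ?_
    · intro a ha; simp at ha ⊢
    · intro a ha; simp at ha ⊢
    · intro a ha; simp at ha; funext j
      by_cases hj : j = k
      · subst hj; simp [ha]
      · simp [Function.update_of_ne hj]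
    · intro a ha; simp at ha; funext j
      by_cases hj : j = k
      · subst hj; simp [ha]
      · simp [Function.update_of_ne hj]
    · intro a ha; simp at ha
      congr 1
      funext j
      by_cases hj : j = k
      · subst hj; simp [ha]
      · simp [Function.update_of_ne hj]
  rw [h2, ← Finset.sum_add_distrib, Finset.sum_filter]

lemma expPay_allone (n : ℕ) (hn : 0 < n) (f : ℝ → ℝ) (P : Fin n → ℝ)
    (hP : ∀ j, P j = 1) (i : Fin n) : expPay n f P i = f 1 := by
  classical
  unfold expPay
  rw [Finset.sum_eq_single (fun _ => true)]
  · have h1 : (Finset.univ.filter (fun j : Fin n => true = true)) = Finset.univ := by simp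
    simp [hP, h1]
    rw [div_self (by exact_mod_cast hn.ne')]
  · intro a _ ha
    have : ∃ j, a j = false := by
      by_contra h
      push_neg at h
      exact ha (funext fun j => by simpa using h j)
    obtain ⟨j, hj⟩ := this
    have : (∏ j, (if a j then P j else 1 - P j)) = 0 := by
      apply Finset.prod_eq_zero (Finset.mem_univ j)
      simp [hj, hP]
    rw [this, zero_mul]
  · intro h; exact absurd (Finset.mem_univ _) h

lemma coupling (n : ℕ) (hn : 0 < n) (f : ℝ → ℝ) (L : ℝ)
    (hLip : ∀ x ∈ Set.Icc (0 : ℝ) 1, ∀ y ∈ Set.Icc (0 : ℝ) 1, |f x - f y| ≤ L * |x - y|)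
    (hL : 0 ≤ L) (p : Fin n → ℝ) (hp : ∀ i, p i ∈ Set.Icc (0 : ℝ) 1)
    (i k : Fin n) (hik : k ≠ i) (hpi : p i = 1) :
    expPay n f p i ≤ expPay n f (Function.update p k 1) k + (1 - p k) * (L / n) := by
  classical
  set P' : Fin n → ℝ := Function.update p k 1 with hP'
  -- weights
  set w : (Fin n → ℝ) → (Fin n → Bool) → Fin n → ℝ :=
    fun P a j => if a j then P j else 1 - P j with hw
  have hwnn : ∀ (P : Fin n → ℝ), (∀ j, 0 ≤ P j ∧ P j ≤ 1) → ∀ a j, 0 ≤ w P a j := by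
    intro P hPm a j
    simp only [hw]
    split
    · exact (hPm j).1
    · linarith [(hPm j).2]
  have hp' : ∀ j, 0 ≤ p j ∧ p j ≤ 1 := fun j => ⟨(hp j).1, (hp j).2⟩
  have hP'm : ∀ j, 0 ≤ P' j ∧ P' j ≤ 1 := by
    intro j
    by_cases hj : j = k
    · subst hj; simp [hP']
    · simp [hP', Function.update_of_ne hj]; exact ⟨(hp j).1, (hp j).2⟩
  -- payoffs as sums
  have key : ∀ a : Fin n → Bool,
      (if a k then
        (∏ j, w p a j) * (if a i then f (((Finset.univ.filter (fun j => a j = true)).card : ℝ) / n) else 0)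
        + (∏ j, w p (Function.update a k false) j) *
            (if (Function.update a k false) i then
              f (((Finset.univ.filter (fun j => (Function.update a k false) j = true)).card : ℝ) / n) else 0)
       else 0)
      ≤ (∏ j, w P' a j) * (if a k then f (((Finset.univ.filter (fun j => a j = true)).card : ℝ) / n) else 0)
        + (1 - p k) * (L / n) * ∏ j, w P' a j := by
    intro a
    by_cases hak : a k
    · simp only [hak, if_true]
      have haui : (Function.update a k false) i = a i := Function.update_of_ne hik.symm _ _
      set R : ℝ := ∏ j ∈ Finset.univ.erase k, w p a j with hR
      have hRnn : 0 ≤ R := Finset.prod_nonneg fun j _ => hwnn p hp' a j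
      have hprod1 : (∏ j, w p a j) = p k * R := by
        rw [← Finset.mul_prod_erase _ _ (Finset.mem_univ k)]
        congr 1; simp [hw, hak]
      have hprod2 : (∏ j, w P' a j) = R := by
        rw [← Finset.mul_prod_erase _ _ (Finset.mem_univ k)]
        have h1 : w P' a k = 1 := by simp [hw, hak, hP']
        rw [h1, one_mul]
        refine Finset.prod_congr rfl fun j hj => ?_
        have hjk : j ≠ k := Finset.ne_of_mem_erase hj
        simp [hw, hP', Function.update_of_ne hjk]
      have hprod3 : (∏ j, w p (Function.update a k false) j) = (1 - p k) * R := by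
        rw [← Finset.mul_prod_erase _ _ (Finset.mem_univ k)]
        congr 1
        · simp [hw]
        · refine Finset.prod_congr rfl fun j hj => ?_
          have hjk : j ≠ k := Finset.ne_of_mem_erase hj
          simp [hw, Function.update_of_ne hjk]
      by_cases hai : a i
      · -- main case
        set c : ℕ := (Finset.univ.filter (fun j => a j = true)).card with hc
        have hkmem : k ∈ Finset.univ.filter (fun j => a j = true) := by simp [hak]
        have himem : i ∈ Finset.univ.filter (fun j => a j = true) := by simp [hai]
        have hc1 : 1 ≤ c := Finset.card_pos.mpr ⟨k, hkmem⟩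
        have hcn : c ≤ n := by
          calc c ≤ Finset.univ.card := Finset.card_filter_le _ _
          _ = n := by simp
        have hfilter : (Finset.univ.filter (fun j => (Function.update a k false) j = true))
            = (Finset.univ.filter (fun j => a j = true)).erase k := by
          ext j
          by_cases hj : j = k
          · subst hj; simp
          · simp [Function.update_of_ne hj, hj]
        have hcard' : ((Finset.univ.filter (fun j => (Function.update a k false) j = true)).card : ℝ)
            = (c : ℝ) - 1 := by
          rw [hfilter, Finset.card_erase_of_mem hkmem]
          rw [Nat.cast_sub hc1]
          simp
        rw [hprod1, hprod2, hprod3, if_pos hai, haui, if_pos hai, hcard']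
        -- Lipschitz bound
        have hnR : (0:ℝ) < n := by exact_mod_cast hn
        have hx : ((c:ℝ) - 1) / n ∈ Set.Icc (0:ℝ) 1 := by
          constructor
          · apply div_nonneg _ hnR.le
            have : (1:ℝ) ≤ (c:ℝ) := by exact_mod_cast hc1
            linarith
          · rw [div_le_one hnR]
            have : (c:ℝ) ≤ n := by exact_mod_cast hcn
            linarith
        have hy : (c:ℝ) / n ∈ Set.Icc (0:ℝ) 1 := by
          constructor
          · positivity
          · rw [div_le_one hnR]; exact_mod_cast hcn
        have hlip := hLip _ hx _ hy
        have habs : |((c:ℝ) - 1) / n - (c:ℝ) / n| = 1 / n := by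
          rw [div_sub_div_same]
          rw [abs_div]
          congr 1
          · rw [abs_of_nonpos] <;> norm_num
          · exact abs_of_pos hnR
        rw [habs] at hlip
        have hdiff : f (((c:ℝ) - 1) / n) - f ((c:ℝ) / n) ≤ L / n := by
          have := abs_le.mp hlip
          have h2 : L * (1/n) = L / n := by ring
          linarith [this.2, (le_of_eq h2)]
        have hpk1 : p k ≤ 1 := (hp k).2
        nlinarith [mul_nonneg (sub_nonneg.mpr hpk1) hRnn, hdiff]
      · -- a i = false : everything is 0 except RHS slack
        have hP'prod0 : (∏ j, w P' a j) = 0 := by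
          apply Finset.prod_eq_zero (Finset.mem_univ i)
          have hPi : P' i = 1 := by rw [hP', Function.update_of_ne hik.symm]; exact hpi
          simp [hw, hai, hPi]
        rw [hprod3, if_neg hai, haui, if_neg hai, hP'prod0]
        simp
    · rw [if_neg hak, if_neg hak, mul_zero, zero_add]
      have hnn : 0 ≤ ∏ j, w P' a j := Finset.prod_nonneg fun j _ => hwnn P' hP'm a j
      have hpk1 : p k ≤ 1 := (hp k).2
      exact mul_nonneg (mul_nonneg (by linarith : (0:ℝ) ≤ 1 - p k)
        (div_nonneg hL (Nat.cast_nonneg n))) hnn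
  -- assemble
  have hWi : expPay n f p i = ∑ a : Fin n → Bool,
      (if a k then
        (∏ j, w p a j) * (if a i then f (((Finset.univ.filter (fun j => a j = true)).card : ℝ) / n) else 0)
        + (∏ j, w p (Function.update a k false) j) *
            (if (Function.update a k false) i then
              f (((Finset.univ.filter (fun j => (Function.update a k false) j = true)).card : ℝ) / n) else 0)
       else 0) := by
    unfold expPay
    exact pair_sum n k _
  have hWk : expPay n f P' k = ∑ a : Fin n → Bool,
      (∏ j, w P' a j) * (if a k then f (((Finset.univ.filter (fun j => a j = true)).card : ℝ) / n) else 0) := rfl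
  have hnorm : (1 - p k) * (L / n) = ∑ a : Fin n → Bool, (1 - p k) * (L / n) * ∏ j, w P' a j := by
    rw [← Finset.mul_sum]
    rw [sum_prod_weights n P']
    ring
  rw [hWi, hWk, hnorm, ← Finset.sum_add_distrib]
  exact Finset.sum_le_sum fun a _ => key a

/-- In the `n`-agent binary-action game with Lipschitz payoff function `f` (constant `L`)
taking both signs and with `f(1) < 0`, every Nash equilibrium gives each agent an
expected payoff in `[0, L/n]`. -/
theorem stmt_17 (n : ℕ) (hn : 0 < n) (f : ℝ → ℝ) (L : ℝ)
    (hLip : ∀ x ∈ Set.Icc (0 : ℝ) 1, ∀ y ∈ Set.Icc (0 : ℝ) 1, |f x - f y| ≤ L * |x - y|)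
    (hposval : ∃ x ∈ Set.Icc (0 : ℝ) 1, 0 < f x)
    (hnegval : ∃ x ∈ Set.Icc (0 : ℝ) 1, f x < 0)
    (hf1 : f 1 < 0)
    (p : Fin n → ℝ) (hp : ∀ i, p i ∈ Set.Icc (0 : ℝ) 1)
    (hNash : ∀ i, ∀ q ∈ Set.Icc (0 : ℝ) 1,
      expPay n f (Function.update p i q) i ≤ expPay n f p i) :
    ∀ i, expPay n f p i ∈ Set.Icc (0 : ℝ) (L / n) := by
  classical
  have hL : 0 < L := by
    obtain ⟨x, hx, hfx⟩ := hposval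
    obtain ⟨y, hy, hfy⟩ := hnegval
    have h1 := hLip x hx y hy
    have h2 := le_abs_self (f x - f y)
    nlinarith [abs_nonneg (x - y)]
  have hnR : (0:ℝ) < n := by exact_mod_cast hn
  have hLn : 0 ≤ L / n := div_nonneg hL.le hnR.le
  set W : Fin n → ℝ := fun j => expPay n f (Function.update p j 1) j with hWdef
  have hE : ∀ j, expPay n f p j = p j * W j := by
    intro j
    conv_lhs => rw [← Function.update_eq_self j p]
    exact expPay_update_scale n f p j (p j)
  intro i
  have hlow : 0 ≤ expPay n f p i := by
    have h0 := hNash i 0 ⟨le_refl 0, by norm_num⟩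
    rw [expPay_update_scale, zero_mul] at h0
    exact h0
  refine ⟨hlow, ?_⟩
  rcases le_or_gt (W i) 0 with hWi | hWi
  · have : expPay n f p i ≤ 0 := by
      rw [hE i]
      exact mul_nonpos_of_nonneg_of_nonpos (hp i).1 hWi
    linarith
  · have h1 := hNash i 1 ⟨by norm_num, le_refl 1⟩
    rw [expPay_update_scale, one_mul, hE i] at h1
    have hpi1 : p i = 1 := le_antisymm (hp i).2 (by nlinarith)
    by_cases hall : ∀ j, p j = 1
    · exfalso
      have hone : ∀ j, (Function.update p i 1) j = 1 := by
        intro j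
        by_cases hj : j = i
        · subst hj; simp
        · rw [Function.update_of_ne hj]; exact hall j
      have := expPay_allone n hn f _ hone i
      have hWieq : W i = f 1 := this
      linarith
    · push_neg at hall
      obtain ⟨k, hk⟩ := hall
      have hki : k ≠ i := fun h => hk (h ▸ hpi1)
      have hpklt : p k < 1 := lt_of_le_of_ne (hp k).2 hk
      have hWk : W k ≤ 0 := by
        have h2 := hNash k 1 ⟨by norm_num, le_refl 1⟩
        rw [expPay_update_scale, one_mul, hE k] at h2
        nlinarith
      have hcoup := coupling n hn f L hLip hL.le p hp i k hki hpi1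
      have : expPay n f (Function.update p k 1) k = W k := rfl
      rw [this] at hcoup
      have hpk0 : 0 ≤ p k := (hp k).1
      nlinarith
end
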